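/- Let R be a finite commutative local ring, m ≤ n, and A an m×n matrix over R with rows α_1,…,α_m. The following statements are equivalent: (i) rk(A) = m; (ii) the rows α_1,…,α_m are linearly independent over R; (iii) there exists S ∈ GL_n(R) with AS = (I_m, 0); (iv) A has a right inverse. -/

import Mathlib

open Matrix

/-- The ideal generated by all `k × k` minors of a matrix. -/
def minorsIdeal {R : Type*} [CommRing R] {m n : ℕ}
    (A : Matrix (Fin m) (Fin n) R) (k : ℕ) : Ideal R :=
  Ideal.span {d | ∃ (r : Fin k → Fin m) (c : Fin k → Fin n), d = (A.submatrix r c).det}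

/-- The McCoy rank of a matrix. -/
noncomputable def mccoyRank {R : Type*} [CommRing R] {m n : ℕ}
    (A : Matrix (Fin m) (Fin n) R) : ℕ :=
  sSup {k | (minorsIdeal A k).annihilator = ⊥}

/-- The `m × n` block matrix `(I_m, 0)`. -/
def idZero (R : Type*) [CommRing R] (m n : ℕ) : Matrix (Fin m) (Fin n) R :=
  Matrix.of fun i j => if (i : ℕ) = (j : ℕ) then 1 else 0

/-!
The only real content is (ii) ⇒ (iii). A finite local ring is Artinian, so its maximal ideal `𝔪`
has a nonzero annihilator `x`. If `∑ c̄ᵢ ᾱᵢ = 0` over the residue field with some `c̄ᵢ ≠ 0`, lift the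
`c̄ᵢ` to `cᵢ`; then `∑ cᵢ αᵢ ∈ 𝔪ⁿ`, so `∑ (x cᵢ) αᵢ = 0` while `x cᵢ ≠ 0` because `cᵢ` is a unit.
Hence the reduced rows are independent, extend to a basis of the residue field's `n`-space, and any
lift of that basis is an invertible matrix `T` whose first `m` rows are those of `A`, i.e.
`A = (I_m, 0) T`. For the other implications: a relation `c A = 0` gives `cᵢ det M = 0` for every
`m × m` minor `M` (multiply by the adjugate), and `A B = 1` puts `1` into the ideal of `m × m` minors
by Cauchy–Binet.
-/

open Finset in
/-- Cauchy–Binet, summed over all maps `ι → κ` rather than over increasing ones. -/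
theorem Matrix.det_mul_eq_sum_prod_mul_det_submatrix {R ι κ : Type*} [CommRing R] [Fintype ι]
    [DecidableEq ι] [Fintype κ] (A : Matrix ι κ R) (B : Matrix κ ι R) :
    (A * B).det = ∑ p : ι → κ, (∏ i, B (p i) i) * (A.submatrix id p).det := by
  simp only [det_apply', mul_apply, prod_univ_sum, mul_sum, Fintype.piFinset_univ]
  rw [sum_comm]
  refine sum_congr rfl fun p _ => sum_congr rfl fun σ _ => ?_
  simp only [submatrix_apply, id, prod_mul_distrib]
  ring

theorem Matrix.det_smul_eq_zero_of_vecMul_eq_zero {R ι : Type*} [CommRing R] [Fintype ι]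
    [DecidableEq ι] {M : Matrix ι ι R} {v : ι → R} (h : v ᵥ* M = 0) : M.det • v = 0 := by
  simpa [vecMul_vecMul, mul_adjugate, vecMul_smul] using congrArg (· ᵥ* M.adjugate) h

theorem Ideal.annihilator_top {R : Type*} [CommRing R] : (⊤ : Ideal R).annihilator = ⊥ := by
  rw [Submodule.annihilator_top, Module.annihilator_eq_bot]
  infer_instance

theorem IsLocalRing.annihilator_maximalIdeal_ne_bot (R : Type*) [CommRing R] [IsLocalRing R]
    [IsArtinianRing R] : (IsLocalRing.maximalIdeal R).annihilator ≠ ⊥ := by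
  obtain ⟨P, hP, -⟩ := exists_le_isAssociatedPrime_of_isNoetherianRing R (1 : R) one_ne_zero
  obtain ⟨hPrime, y, hy⟩ := Submodule.isAssociatedPrime_iff.1 hP
  rw [IsLocalRing.eq_maximalIdeal (IsArtinianRing.isMaximal_of_isPrime P)] at hy
  refine (Submodule.ne_bot_iff _).2 ⟨y, Submodule.mem_annihilator.2 fun z hz => ?_, fun hy0 => ?_⟩
  · rw [hy, Submodule.mem_colon_singleton] at hz
    simpa [mul_comm] using hz
  · have : (1 : R) ∈ IsLocalRing.maximalIdeal R := by
      rw [hy, Submodule.mem_colon_singleton, hy0, smul_zero]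
      exact Submodule.zero_mem _
    exact Ideal.one_notMem _ this

theorem LinearIndependent.exists_isUnit_castLE_row_eq {K : Type*} [Field K] {m n : ℕ}
    (hmn : m ≤ n) {v : Fin m → Fin n → K} (hv : LinearIndependent K v) :
    ∃ T : Matrix (Fin n) (Fin n) K, IsUnit T ∧ ∀ i, T (Fin.castLE hmn i) = v i := by
  suffices ∀ k (hmk : m ≤ k), k ≤ n →
      ∃ w : Fin k → Fin n → K, LinearIndependent K w ∧ ∀ i, w (Fin.castLE hmk i) = v i by
    obtain ⟨T, hT, hTv⟩ := this n hmn le_rfl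
    exact ⟨T, linearIndependent_rows_iff_isUnit.1 hT, hTv⟩
  intro k hmk
  induction k, hmk using Nat.le_induction with
  | base => exact fun _ => ⟨v, hv, fun i => by simp⟩
  | succ k hmk ih =>
    intro hkn
    obtain ⟨w, hw, hwv⟩ := ih (by omega)
    obtain ⟨x, hx⟩ := exists_linearIndependent_snoc_of_lt_finrank hw (by simpa using hkn)
    refine ⟨Fin.snoc w x, hx, fun i => ?_⟩
    rw [← hwv i, ← Fin.snoc_castSucc (α := fun _ => Fin n → K) x w]
    rfl

section Minors

variable {R : Type*} [CommRing R] {m n : ℕ}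

lemma minorsIdeal_zero (A : Matrix (Fin m) (Fin n) R) : minorsIdeal A 0 = ⊤ :=
  (Ideal.eq_top_iff_one _).2 <| Ideal.subset_span ⟨Fin.elim0, Fin.elim0, det_fin_zero.symm⟩

lemma minorsIdeal_eq_bot_of_lt (A : Matrix (Fin m) (Fin n) R) {k : ℕ} (hk : m < k) :
    minorsIdeal A k = ⊥ := by
  rw [minorsIdeal, Ideal.span_eq_bot]
  rintro _ ⟨r, c, rfl⟩
  obtain ⟨i, j, hij, hr⟩ := Fintype.exists_ne_map_eq_of_card_lt r (by simpa using hk)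
  exact det_zero_of_row_eq hij (funext fun l => by simp [hr])

lemma mccoyRank_eq_iff [Nontrivial R] (A : Matrix (Fin m) (Fin n) R) :
    mccoyRank A = m ↔ (minorsIdeal A m).annihilator = ⊥ := by
  set K := {k | (minorsIdeal A k).annihilator = ⊥}
  have hK0 : 0 ∈ K := by simp [K, minorsIdeal_zero, Ideal.annihilator_top]
  have hKm : ∀ k ∈ K, k ≤ m := fun k hk => by
    by_contra! h
    rw [Set.mem_ofPred_eq, minorsIdeal_eq_bot_of_lt A h, Submodule.annihilator_bot] at hk
    exact top_ne_bot hk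
  have hmem : mccoyRank A ∈ K := Nat.sSup_mem ⟨0, hK0⟩ ⟨m, hKm⟩
  exact ⟨fun h => (h ▸ hmem : m ∈ K),
    fun h => le_antisymm (csSup_le ⟨0, hK0⟩ hKm) (le_csSup ⟨m, hKm⟩ h)⟩

lemma det_submatrix_mul_mem_minorsIdeal {p k : ℕ} (A : Matrix (Fin m) (Fin n) R)
    (B : Matrix (Fin n) (Fin p) R) (r : Fin k → Fin m) (c : Fin k → Fin p) :
    ((A * B).submatrix r c).det ∈ minorsIdeal A k := by
  rw [submatrix_mul _ _ _ id _ Function.bijective_id, det_mul_eq_sum_prod_mul_det_submatrix]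
  exact Ideal.sum_mem _ fun f _ => Ideal.mul_mem_left _ _ (Ideal.subset_span ⟨r, f, rfl⟩)

lemma one_mem_minorsIdeal_of_mul_eq_one {A : Matrix (Fin m) (Fin n) R}
    {B : Matrix (Fin n) (Fin m) R} (h : A * B = 1) : (1 : R) ∈ minorsIdeal A m := by
  simpa [h] using det_submatrix_mul_mem_minorsIdeal A B id id

lemma mem_annihilator_minorsIdeal_of_vecMul_eq_zero {A : Matrix (Fin m) (Fin n) R}
    {v : Fin m → R} (hv : v ᵥ* A = 0) (i : Fin m) : v i ∈ (minorsIdeal A m).annihilator := by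
  rw [minorsIdeal, Ideal.span, Submodule.mem_annihilator_span]
  rintro ⟨_, r, c, rfl⟩
  change v i * (A.submatrix r c).det = 0
  by_cases hr : Function.Injective r
  · have hvc : v ᵥ* A.submatrix id c = 0 := by
      ext j
      simpa [vecMul, dotProduct] using congrFun hv (c j)
    have hdet : (A.submatrix id c).det * v i = 0 := by
      simpa using congrFun (det_smul_eq_zero_of_vecMul_eq_zero hvc) i
    let σ := Equiv.ofBijective r (Finite.injective_iff_bijective.1 hr)
    change v i * ((A.submatrix id c).submatrix σ id).det = 0
    rw [det_permute, mul_left_comm, mul_comm (v i), hdet, mul_zero]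
  · obtain ⟨a, b, hab, hrab⟩ := Function.not_injective_iff.1 hr
    rw [det_zero_of_row_eq hrab (funext fun l => by simp [hab]), mul_zero]

end Minors

lemma idZero_eq_submatrix_one (R : Type*) [CommRing R] {m n : ℕ} (hmn : m ≤ n) :
    idZero R m n = (1 : Matrix (Fin n) (Fin n) R).submatrix (Fin.castLE hmn) id := by
  ext i j
  simp [idZero, one_apply, Fin.ext_iff]

lemma idZero_mul {R ι : Type*} [CommRing R] {m n : ℕ} (hmn : m ≤ n) (T : Matrix (Fin n) ι R) :
    idZero R m n * T = T.submatrix (Fin.castLE hmn) id := by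
  rw [idZero_eq_submatrix_one R hmn]
  exact one_submatrix_mul _ (Equiv.refl _) T

lemma idZero_mul_transpose (R : Type*) [CommRing R] {m n : ℕ} (hmn : m ≤ n) :
    idZero R m n * (idZero R m n)ᵀ = 1 := by
  rw [idZero_mul hmn, idZero_eq_submatrix_one R hmn, transpose_submatrix, transpose_one,
    submatrix_submatrix]
  exact submatrix_one _ (Fin.castLE_injective hmn)

section LocalRing

open IsLocalRing

variable {R : Type*} [CommRing R] [IsLocalRing R]

lemma LinearIndependent.map_residue [IsArtinianRing R] {ι κ : Type*} [Fintype ι]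
    {v : ι → κ → R} (hv : LinearIndependent R v) :
    LinearIndependent (ResidueField R) fun i j => residue R (v i j) := by
  obtain ⟨x, hx, hx0⟩ :=
    Submodule.exists_mem_ne_zero_of_ne_bot (annihilator_maximalIdeal_ne_bot R)
  rw [Fintype.linearIndependent_iff] at hv ⊢
  intro g hg i
  by_contra hgi
  let c := fun i => Function.surjInv residue_surjective (g i)
  have hc : ∀ j, ∑ i, c i * v i j ∈ maximalIdeal R := fun j => by
    rw [← residue_eq_zero_iff]
    simpa [c, Function.surjInv_eq] using congrFun hg j
  have hxc := hv (fun i => x * c i) <| by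
    ext j
    simpa [Finset.mul_sum, mul_assoc] using Submodule.mem_annihilator.1 hx _ (hc j)
  have hci : IsUnit (c i) :=
    (residue_ne_zero_iff_isUnit _).1 (by simpa [c, Function.surjInv_eq] using hgi)
  exact hx0 (hci.mul_left_eq_zero.1 (hxc i))

lemma exists_isUnit_castLE_row_eq_of_residue {m n : ℕ} (hmn : m ≤ n)
    (A : Matrix (Fin m) (Fin n) R)
    (hA : LinearIndependent (ResidueField R) fun i j => residue R (A i j)) :
    ∃ T : Matrix (Fin n) (Fin n) R, IsUnit T ∧ ∀ i, T (Fin.castLE hmn i) = A i := by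
  obtain ⟨T₀, hT₀, hT₀A⟩ := hA.exists_isUnit_castLE_row_eq hmn
  let T : Matrix (Fin n) (Fin n) R := of fun k j =>
    if h : (k : ℕ) < m then A ⟨k, h⟩ j else Function.surjInv residue_surjective (T₀ k j)
  have hT : T.map (residue R) = T₀ := by
    ext k j
    by_cases h : (k : ℕ) < m
    · simpa [T, h] using (congrFun (hT₀A ⟨k, h⟩) j).symm
    · simp [T, h, Function.surjInv_eq]
  refine ⟨T, ?_, fun i => by ext j; simp [T]⟩
  rw [isUnit_iff_isUnit_det, ← isUnit_map_iff (residue R), RingHom.map_det,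
    RingHom.mapMatrix_apply, hT, ← isUnit_iff_isUnit_det]
  exact hT₀

end LocalRing

theorem mccoyRank_tfae_local {R : Type*} [CommRing R] [IsLocalRing R] [Fintype R]
    {m n : ℕ} (hmn : m ≤ n) (A : Matrix (Fin m) (Fin n) R) :
    [mccoyRank A = m,
     LinearIndependent R (fun i : Fin m => A i),
     ∃ S : GL (Fin n) R, A * (S : Matrix (Fin n) (Fin n) R) = idZero R m n,
     ∃ B : Matrix (Fin n) (Fin m) R, A * B = 1].TFAE := by
  tfae_have 1 → 2 := fun h => by
    rw [Fintype.linearIndependent_iff]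
    intro c hc i
    have hcA : c ᵥ* A = 0 := by rwa [vecMul_eq_sum]
    simpa [(mccoyRank_eq_iff A).1 h] using mem_annihilator_minorsIdeal_of_vecMul_eq_zero hcA i
  tfae_have 2 → 3 := fun h => by
    obtain ⟨T, hT, hTA⟩ := exists_isUnit_castLE_row_eq_of_residue hmn A h.map_residue
    have hA : A = idZero R m n * T := by
      rw [idZero_mul hmn]
      exact funext fun i => (hTA i).symm
    exact ⟨hT.unit⁻¹, by rw [hA, Matrix.mul_assoc, hT.mul_val_inv, Matrix.mul_one]⟩
  tfae_have 3 → 4 := fun ⟨S, hS⟩ => ⟨(S : Matrix (Fin n) (Fin n) R) * (idZero R m n)ᵀ, by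
    rw [← Matrix.mul_assoc, hS, idZero_mul_transpose R hmn]⟩
  tfae_have 4 → 1 := fun ⟨B, hB⟩ => by
    rw [mccoyRank_eq_iff, (Ideal.eq_top_iff_one _).2 (one_mem_minorsIdeal_of_mul_eq_one hB),
      Ideal.annihilator_top]
  tfae_finish
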